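/- Let G be a finite directed graph of transactions where each edge is labeled WW, WR, or RW, and suppose: (1) every WW or WR edge (T_i,T_j) satisfies commit(T_i) < commit(T_j); (2) every RW edge (T_i,T_j) between concurrent transactions satisfies commit(T_i) < commit(T_j). Then G contains no cycle, hence the schedule is serializable. -/
import Mathlib


inductive Lbl | WW | WR | RW
deriving DecidableEq

/-- Two transactions are concurrent if their `[start, commit]` intervals overlap. -/
def Concurrent {V : Type*} (start commit : V → ℝ) (i j : V) : Prop :=
  start i < commit j ∧ start j < commit i

/-- If (1) every WW or WR edge (Tᵢ,Tⱼ) satisfies commit(Tᵢ) < commit(Tⱼ) and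
(2) every RW edge is between concurrent transactions and satisfies
commit(Tᵢ) < commit(Tⱼ), then the finite dependency graph contains no cycle,
hence the schedule is serializable. -/
theorem stmt_2 {V : Type*} [Fintype V] (E : V → V → Lbl → Prop)
    (start commit : V → ℝ)
    (hsc : ∀ T, start T < commit T)
    (hinj : Function.Injective commit)
    (hOther : ∀ i j l, E i j l → l ≠ Lbl.RW → commit i < commit j)
    (hRWconc : ∀ i j, E i j Lbl.RW → Concurrent start commit i j)
    (hRW : ∀ i j, E i j Lbl.RW → Concurrent start commit i j →
      commit i < commit j) :
    ∀ (n : ℕ), 0 < n → ∀ (f : ZMod n → V) (lbl : ZMod n → Lbl),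
      (∀ i : ZMod n, E (f i) (f (i + 1)) (lbl i)) → False := by
  intro n hn f lbl hE
  haveI : NeZero n := ⟨hn.ne'⟩
  have key : ∀ i : ZMod n, commit (f i) < commit (f (i + 1)) := by
    intro i
    cases h : lbl i with
    | RW => exact hRW _ _ (h ▸ hE i) (hRWconc _ _ (h ▸ hE i))
    | WW => exact hOther _ _ _ (hE i) (by simp [h])
    | WR => exact hOther _ _ _ (hE i) (by simp [h])
  obtain ⟨i, hi⟩ := Finite.exists_max (fun i : ZMod n => commit (f i))
  exact absurd (hi (i + 1)) (not_le.mpr (key i))
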